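/- Let G ∈ ℝ^{N×N}, t₀ > 0, and let q : [t₀, ∞) → ℝ^N satisfy the NAGD game dynamics q''(t) + (3/t) q'(t) + G q(t) = 0. Let w ∈ ℝ^N be a nonzero vector in the left null space of G, i.e. Gᵀw = 0. Define y₁(t) = wᵀ q(t) and y₂(t) = wᵀ q'(t). Then for all t ≥ t₀: y₂(t) = (t₀/t)³ y₂(t₀), and y₁(t) → y₁(t₀) + (t₀/2) y₂(t₀) as t → ∞. -/

import Mathlib

open Filter

/-- NAGD game dynamics: `q` is a twice continuously differentiable trajectory with
velocity `v = q'` satisfying `q'' + (3/t) q' + G q = 0` on `[t₀, ∞)`. -/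
def IsNAGDTrajectory {N : ℕ} (G : Matrix (Fin N) (Fin N) ℝ) (t₀ : ℝ)
    (q v : ℝ → Fin N → ℝ) : Prop :=
  (∀ t, t₀ ≤ t → HasDerivAt q (v t) t) ∧
  (∀ t, t₀ ≤ t → HasDerivAt v (-(3 / t) • v t - G.mulVec (q t)) t)

/-!
Since `wᵀ G = 0`, pairing the dynamics with `w` kills the game term: `y₂ = wᵀ q'` solves the
Euler equation `y₂' = -(3/t) y₂`, so `t³ y₂(t)` is constant. Then `y₁' = y₂ = c (t₀/t)³` with
`c = y₂(t₀)`, whose primitive `y₁(t₀) + (t₀/2) c (1 - (t₀/t)²)` tends to `y₁(t₀) + (t₀/2) c`.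
-/

open Topology Matrix

theorem HasDerivAt.dotProduct_left {𝕜 ι : Type*} [NontriviallyNormedField 𝕜] [Fintype ι]
    (w : ι → 𝕜) {f : 𝕜 → ι → 𝕜} {f' : ι → 𝕜} {t : 𝕜} (h : HasDerivAt f f' t) :
    HasDerivAt (fun s => w ⬝ᵥ f s) (w ⬝ᵥ f') t := by
  simp only [dotProduct]
  exact HasDerivAt.fun_sum fun i _ => (hasDerivAt_pi.mp h i).const_mul (w i)

theorem Matrix.dotProduct_mulVec_eq_zero_of_transpose_mulVec {m n R : Type*} [Fintype m]
    [Fintype n] [CommSemiring R] {A : Matrix m n R} {w : m → R} (hw : Aᵀ *ᵥ w = 0)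
    (x : n → R) : w ⬝ᵥ A *ᵥ x = 0 := by
  rw [dotProduct_mulVec, ← mulVec_transpose, hw, zero_dotProduct]

theorem eq_of_hasDerivAt_zero_Ici {E : Type*} [NormedAddCommGroup E] [NormedSpace ℝ E]
    {f : ℝ → E} {t₀ : ℝ} (h : ∀ t, t₀ ≤ t → HasDerivAt f 0 t) (t : ℝ) (ht : t₀ ≤ t) :
    f t = f t₀ :=
  constant_of_has_deriv_right_zero (fun s hs => (h s hs.1).continuousAt.continuousWithinAt)
    (fun s hs => (h s hs.1).hasDerivWithinAt) t ⟨ht, le_rfl⟩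

/-- `t ^ k * y t` is constant on `[t₀, ∞)`. -/
theorem eq_div_pow_mul_of_hasDerivAt {y : ℝ → ℝ} {t₀ : ℝ} (k : ℕ) (ht₀ : 0 < t₀)
    (hy : ∀ t, t₀ ≤ t → HasDerivAt y (-(k / t) * y t) t) (t : ℝ) (ht : t₀ ≤ t) :
    y t = (t₀ / t) ^ k * y t₀ := by
  have hconst : ∀ s, t₀ ≤ s → HasDerivAt (fun r => r ^ k * y r) 0 s := by
    intro s hs
    have hs0 : s ≠ 0 := (ht₀.trans_le hs).ne'
    refine ((hasDerivAt_pow k s).fun_mul (hy s hs)).congr_deriv ?_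
    rcases k with _ | m
    · simp
    · rw [Nat.add_sub_cancel, pow_succ]
      field_simp
      push_cast
      ring
  have ht0 : t ≠ 0 := (ht₀.trans_le ht).ne'
  rw [div_pow, div_mul_eq_mul_div, ← eq_of_hasDerivAt_zero_Ici hconst t ht]
  field_simp

/-- `y + F` is constant for the primitive `F s = t₀ c (t₀/s)^(k+1) / (k+1)` of `-c (t₀/s)^(k+2)`,
and `F → 0`. -/
theorem tendsto_of_hasDerivAt_mul_div_pow {y : ℝ → ℝ} {t₀ c : ℝ} (k : ℕ) (ht₀ : 0 < t₀)
    (hy : ∀ t, t₀ ≤ t → HasDerivAt y (c * (t₀ / t) ^ (k + 2)) t) :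
    Tendsto y atTop (𝓝 (y t₀ + t₀ / (k + 1) * c)) := by
  set F : ℝ → ℝ := fun s => t₀ / (k + 1) * c * (t₀ / s) ^ (k + 1) with hF
  have hF_deriv : ∀ t, t₀ ≤ t → HasDerivAt F (-(c * (t₀ / t) ^ (k + 2))) t := by
    intro t ht
    have ht0 : t ≠ 0 := (ht₀.trans_le ht).ne'
    have h := (((hasDerivAt_inv ht0).const_mul t₀).fun_pow (k + 1)).const_mul (t₀ / (k + 1) * c)
    simp only [← div_eq_mul_inv, Nat.add_sub_cancel] at h
    refine h.congr_deriv ?_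
    rw [pow_add]
    generalize (t₀ / t) ^ k = u
    push_cast
    field_simp
  have hconst := eq_of_hasDerivAt_zero_Ici
    (fun t ht => by simpa using (hy t ht).add (hF_deriv t ht))
  have hF_lim : Tendsto F atTop (𝓝 0) := by
    simpa [hF] using ((tendsto_const_nhds (x := t₀)).div_atTop tendsto_id).pow (k + 1)
      |>.const_mul (t₀ / (k + 1) * c)
  have hFt₀ : F t₀ = t₀ / (k + 1) * c := by simp [hF, ht₀.ne']
  refine (tendsto_const_nhds.sub hF_lim).congr' ?_ |>.mono_right (by rw [sub_zero, ← hFt₀])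
  filter_upwards [eventually_ge_atTop t₀] with t ht
  have := hconst t ht
  simp only [Pi.add_apply] at this
  linarith

theorem stmt_5_general {N : ℕ} (G : Matrix (Fin N) (Fin N) ℝ) (t₀ : ℝ) (ht₀ : 0 < t₀)
    (q v : ℝ → Fin N → ℝ) (htraj : IsNAGDTrajectory G t₀ q v)
    (w : Fin N → ℝ) (hnull : G.transpose.mulVec w = 0) :
    (∀ t, t₀ ≤ t →
      dotProduct w (v t) = (t₀ / t) ^ 3 * dotProduct w (v t₀)) ∧
    Tendsto (fun t => dotProduct w (q t)) atTop
      (nhds (dotProduct w (q t₀) + t₀ / 2 * dotProduct w (v t₀))) := by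
  obtain ⟨hq, hv⟩ := htraj
  have hy₂ : ∀ t, t₀ ≤ t → HasDerivAt (fun s => w ⬝ᵥ v s) (-((3 : ℕ) / t) * w ⬝ᵥ v t) t :=
    fun t ht => ((hv t ht).dotProduct_left w).congr_deriv (by
      rw [dotProduct_sub, dotProduct_smul, dotProduct_mulVec_eq_zero_of_transpose_mulVec hnull,
        sub_zero, smul_eq_mul, Nat.cast_ofNat])
  have hv_decay := eq_div_pow_mul_of_hasDerivAt 3 ht₀ hy₂
  refine ⟨hv_decay, ?_⟩
  have hy₁ : ∀ t, t₀ ≤ t → HasDerivAt (fun s => w ⬝ᵥ q s) (w ⬝ᵥ v t₀ * (t₀ / t) ^ (1 + 2)) t :=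
    fun t ht => ((hq t ht).dotProduct_left w).congr_deriv (by rw [hv_decay t ht, mul_comm])
  convert tendsto_of_hasDerivAt_mul_div_pow 1 ht₀ hy₁ using 3
  norm_num

/-- if `w ≠ 0` is in the left null space of `G` (`Gᵀ w = 0`), then along any
NAGD trajectory, `y₂(t) = wᵀ q'(t)` satisfies `y₂(t) = (t₀/t)³ y₂(t₀)` and
`y₁(t) = wᵀ q(t)` converges to `y₁(t₀) + (t₀/2) y₂(t₀)`. -/
theorem stmt_5 {N : ℕ} (G : Matrix (Fin N) (Fin N) ℝ) (t₀ : ℝ) (ht₀ : 0 < t₀)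
    (q v : ℝ → Fin N → ℝ) (htraj : IsNAGDTrajectory G t₀ q v)
    (w : Fin N → ℝ) (hw : w ≠ 0) (hnull : G.transpose.mulVec w = 0) :
    (∀ t, t₀ ≤ t →
      dotProduct w (v t) = (t₀ / t) ^ 3 * dotProduct w (v t₀)) ∧
    Tendsto (fun t => dotProduct w (q t)) atTop
      (nhds (dotProduct w (q t₀) + t₀ / 2 * dotProduct w (v t₀))) :=
  stmt_5_general G t₀ ht₀ q v htraj w hnull
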